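/- Let X, E be compact metric spaces, Z a finite set, q a Borel probability measure on E. Let w : X × Z × A × P(X) × E → X be jointly continuous with A compact, and let g : X × Z × P(X) → A be continuous. For m = 1 + ∑_{j=1}^{N} |Z|^j, define Φ : P(X)^m → P(X)^m by keeping the root coordinate fixed and, for each history node, setting the child measure Φs(z^{t,t+k}, z_i)(D) = ∫_X ∫_E 1_D( w(x, z_i, g(x, z_{t+k}, s(z^{t,t+k})), s(z^{t,t+k}), ζ) ) q(dζ) s(z^{t,t+k})(dx). Then Φ is continuous in the product weak topology and has a fixed point. -/
import Mathlib


open MeasureTheory Filter Topology BoundedContinuousFunction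

/-- Histories of aggregate shocks of length at most `N`: the nodes of the depth-`N`
foresight tree (the root is the empty history, standing for the current state). -/
def ForesightHist (Z : Type*) (N : ℕ) : Type _ := {l : List Z // l.length ≤ N}

section


variable {X E : Type*} [MetricSpace X] [CompactSpace X]
  [MeasurableSpace X] [BorelSpace X]
  [MetricSpace E] [CompactSpace E] [MeasurableSpace E] [BorelSpace E]

set_option linter.unusedSectionVars false
set_option linter.unusedVariables false

lemma bfe_meas (q : ProbabilityMeasure E) (u : X × ProbabilityMeasure X × E → X)
    (hu : Continuous u) (μ : ProbabilityMeasure X) :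
    Continuous (fun p : X × E => u (p.1, μ, p.2)) :=
  hu.comp (continuous_fst.prodMk (continuous_const.prodMk continuous_snd))

noncomputable def bfePush (q : ProbabilityMeasure E) (u : X × ProbabilityMeasure X × E → X)
    (hu : Continuous u) (μ : ProbabilityMeasure X) : ProbabilityMeasure X :=
  ⟨Measure.map (fun p : X × E => u (p.1, μ, p.2)) ((μ : Measure X).prod (q : Measure E)),
   Measure.isProbabilityMeasure_map (bfe_meas q u hu μ).measurable.aemeasurable⟩

lemma bfePush_coe (q : ProbabilityMeasure E) (u : X × ProbabilityMeasure X × E → X)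
    (hu : Continuous u) (μ : ProbabilityMeasure X) :
    (bfePush q u hu μ : Measure X)
      = Measure.map (fun p : X × E => u (p.1, μ, p.2)) ((μ : Measure X).prod (q : Measure E)) :=
  rfl

lemma bfePush_integral (q : ProbabilityMeasure E) (u : X × ProbabilityMeasure X × E → X)
    (hu : Continuous u) (μ : ProbabilityMeasure X) (f : X →ᵇ ℝ) :
    ∫ x, f x ∂(bfePush q u hu μ : Measure X)
      = ∫ x, (∫ ζ, f (u (x, μ, ζ)) ∂(q : Measure E)) ∂(μ : Measure X) := by
  rw [bfePush_coe, integral_map (bfe_meas q u hu μ).measurable.aemeasurable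
    f.continuous.measurable.aestronglyMeasurable]
  exact integral_prod _ ((f.compContinuous ⟨_, bfe_meas q u hu μ⟩).integrable _)

lemma continuous_bfePush (q : ProbabilityMeasure E) (u : X × ProbabilityMeasure X × E → X)
    (hu : Continuous u) : Continuous (bfePush q u hu) := by
  rw [continuous_iff_continuousAt]
  intro μ₀
  rw [ContinuousAt, ProbabilityMeasure.tendsto_iff_forall_integral_tendsto]
  intro f
  have hH : Continuous (fun p : ProbabilityMeasure X × X =>
      ∫ ζ, f (u (p.2, p.1, ζ)) ∂(q : Measure E)) := by
    apply continuous_of_dominated (bound := fun _ => ‖f‖)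
    · intro p
      exact (f.continuous.comp (hu.comp
        (continuous_const.prodMk (continuous_const.prodMk continuous_id)))).measurable.aestronglyMeasurable
    · intro p; exact Eventually.of_forall fun ζ => f.norm_coe_le_norm _
    · exact integrable_const _
    · exact Eventually.of_forall fun ζ => f.continuous.comp (hu.comp
        (continuous_snd.prodMk (continuous_fst.prodMk continuous_const)))
  set H : ProbabilityMeasure X × X → ℝ :=
    fun p => ∫ ζ, f (u (p.2, p.1, ζ)) ∂(q : Measure E) with hHdef
  have key : ∀ μ : ProbabilityMeasure X, ∫ x, f x ∂(bfePush q u hu μ : Measure X)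
      = ∫ x, H (μ, x) ∂(μ : Measure X) := fun μ => bfePush_integral q u hu μ f
  simp only [key]
  set Gc : C(ProbabilityMeasure X, C(X, ℝ)) := ContinuousMap.curry ⟨H, hH⟩ with hGc
  have hGapp : ∀ μ x, Gc μ x = H (μ, x) := fun μ x => rfl
  have hHc : ∀ μ' : ProbabilityMeasure X, Continuous (fun x => H (μ', x)) :=
    fun μ' => hH.comp (continuous_const.prodMk continuous_id)
  have intH : ∀ ν μ' : ProbabilityMeasure X,
      Integrable (fun x => H (μ', x)) (ν : Measure X) := fun ν μ' =>
    (BoundedContinuousFunction.mkOfCompact ⟨fun x => H (μ', x), hHc μ'⟩).integrable _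
  have h1 : Tendsto (fun μ : ProbabilityMeasure X => ∫ x, H (μ₀, x) ∂(μ : Measure X))
      (𝓝 μ₀) (𝓝 (∫ x, H (μ₀, x) ∂(μ₀ : Measure X))) :=
    ProbabilityMeasure.tendsto_iff_forall_integral_tendsto.mp tendsto_id
      (BoundedContinuousFunction.mkOfCompact ⟨fun x => H (μ₀, x), hHc μ₀⟩)
  have h2 : Tendsto (fun μ : ProbabilityMeasure X =>
      ∫ x, H (μ, x) ∂(μ : Measure X) - ∫ x, H (μ₀, x) ∂(μ : Measure X)) (𝓝 μ₀) (𝓝 0) := by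
    apply squeeze_zero_norm (a := fun μ => dist (Gc μ) (Gc μ₀))
    · intro μ
      rw [← integral_sub (intH μ μ) (intH μ μ₀)]
      have hb : ∀ x, ‖H (μ, x) - H (μ₀, x)‖ ≤ dist (Gc μ) (Gc μ₀) := by
        intro x
        rw [← hGapp μ x, ← hGapp μ₀ x, ← dist_eq_norm]
        exact ContinuousMap.dist_apply_le_dist x
      calc ‖∫ x, (H (μ, x) - H (μ₀, x)) ∂(μ : Measure X)‖
          ≤ dist (Gc μ) (Gc μ₀) * ((μ : Measure X) Set.univ).toReal :=
            norm_integral_le_of_norm_le_const (Eventually.of_forall hb)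
        _ = dist (Gc μ) (Gc μ₀) := by simp
    · have := (Gc.continuous.tendsto μ₀).dist (tendsto_const_nhds : Tendsto _ (𝓝 μ₀) (𝓝 (Gc μ₀)))
      simpa using this
  have : (fun μ : ProbabilityMeasure X => ∫ x, H (μ, x) ∂(μ : Measure X))
      = fun μ : ProbabilityMeasure X => (∫ x, H (μ, x) ∂(μ : Measure X) - ∫ x, H (μ₀, x) ∂(μ : Measure X))
        + ∫ x, H (μ₀, x) ∂(μ : Measure X) := by funext μ; ring
  rw [this]
  simpa using h2.add h1


variable {A Z : Type*} [MetricSpace A] [CompactSpace A]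
  [Finite Z] [TopologicalSpace Z] [DiscreteTopology Z]

lemma bfe_u_cont (w : X × Z × A × ProbabilityMeasure X × E → X) (hw : Continuous w)
    (g : X × Z × ProbabilityMeasure X → A) (hg : Continuous g) (zi c : Z) :
    Continuous fun t : X × ProbabilityMeasure X × E =>
      w (t.1, zi, g (t.1, c, t.2.1), t.2.1, t.2.2) := by
  apply hw.comp
  exact continuous_fst.prodMk (continuous_const.prodMk
    ((hg.comp (continuous_fst.prodMk (continuous_const.prodMk
        (continuous_fst.comp continuous_snd)))).prodMk
      ((continuous_fst.comp continuous_snd).prodMk (continuous_snd.comp continuous_snd))))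

noncomputable def bfeBuild (z₀ : Z) (q : ProbabilityMeasure E)
    (w : X × Z × A × ProbabilityMeasure X × E → X) (hw : Continuous w)
    (g : X × Z × ProbabilityMeasure X → A) (hg : Continuous g)
    (μ₀ : ProbabilityMeasure X) : List Z → ProbabilityMeasure X
  | [] => μ₀
  | zi :: r => bfePush q
      (fun t => w (t.1, zi, g (t.1, r.reverse.getLastD z₀, t.2.1), t.2.1, t.2.2))
      (bfe_u_cont w hw g hg zi _) (bfeBuild z₀ q w hw g hg μ₀ r)

lemma bfeBuild_concat (z₀ : Z) (q : ProbabilityMeasure E)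
    (w : X × Z × A × ProbabilityMeasure X × E → X) (hw : Continuous w)
    (g : X × Z × ProbabilityMeasure X → A) (hg : Continuous g)
    (μ₀ : ProbabilityMeasure X) (l' : List Z) (zi : Z) :
    bfeBuild z₀ q w hw g hg μ₀ ((l' ++ [zi]).reverse) =
      bfePush q (fun t => w (t.1, zi, g (t.1, l'.getLastD z₀, t.2.1), t.2.1, t.2.2))
        (bfe_u_cont w hw g hg zi _) (bfeBuild z₀ q w hw g hg μ₀ l'.reverse) := by
  have h : (l' ++ [zi]).reverse = zi :: l'.reverse := by simp
  rw [h]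
  show bfePush q
      (fun t => w (t.1, zi, g (t.1, l'.reverse.reverse.getLastD z₀, t.2.1), t.2.1, t.2.2))
      (bfe_u_cont w hw g hg zi _) (bfeBuild z₀ q w hw g hg μ₀ l'.reverse) = _
  simp only [List.reverse_reverse]

end

/-- The N-BFE population-state operator on the depth-`N` foresight tree is continuous
in the product of weak topologies and has a fixed point (Schauder–Tychonoff): the
root coordinate is kept fixed, and the measure at each child node `(l, z_i)` is the
law of `w(x, z_i, g(x, z_{t+k}, s_l), s_l, ζ)` with `x ~ s_l`, `ζ ~ q`, where
`z_{t+k}` is the current shock at node `l` (the initial state `z₀` if `l` is empty). -/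
theorem foresight_operator_continuous_and_fixedPoint
    {X E A Z : Type*} [MetricSpace X] [CompactSpace X] [Nonempty X]
    [MeasurableSpace X] [BorelSpace X]
    [MetricSpace E] [CompactSpace E] [MeasurableSpace E] [BorelSpace E]
    [MetricSpace A] [CompactSpace A]
    [Finite Z] [TopologicalSpace Z] [DiscreteTopology Z]
    (N : ℕ) (z₀ : Z)
    (q : ProbabilityMeasure E)
    (w : X × Z × A × ProbabilityMeasure X × E → X) (hw : Continuous w)
    (g : X × Z × ProbabilityMeasure X → A) (hg : Continuous g)
    (Φ : (ForesightHist Z N → ProbabilityMeasure X) →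
         (ForesightHist Z N → ProbabilityMeasure X))
    (hroot : ∀ s : ForesightHist Z N → ProbabilityMeasure X,
      Φ s ⟨[], Nat.zero_le N⟩ = s ⟨[], Nat.zero_le N⟩)
    (hchild : ∀ (s : ForesightHist Z N → ProbabilityMeasure X)
      (l : List Z) (hl : l.length < N) (zi : Z),
      (Φ s ⟨l ++ [zi], by simpa using hl⟩ : Measure X) =
        Measure.map (fun p : X × E =>
            w (p.1, zi, g (p.1, l.getLastD z₀, s ⟨l, hl.le⟩), s ⟨l, hl.le⟩, p.2))
          (((s ⟨l, hl.le⟩ : Measure X)).prod (q : Measure E))) :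
    Continuous Φ ∧ ∃ s, Φ s = s := by
  classical
  have hX : Nonempty X := inferInstance
  set μinit : ProbabilityMeasure X :=
    ⟨Measure.dirac (Classical.arbitrary X), inferInstance⟩ with hμinit
  constructor
  · apply continuous_pi
    intro h
    obtain ⟨l, hl⟩ := h
    rcases List.eq_nil_or_concat' l with rfl | ⟨l', zi, rfl⟩
    · have : (fun s : ForesightHist Z N → ProbabilityMeasure X => Φ s ⟨[], hl⟩)
          = fun s => s ⟨[], Nat.zero_le N⟩ := funext fun s => hroot s
      rw [this]
      exact continuous_apply _
    · have hl' : l'.length < N := by simp at hl; omega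
      have : (fun s : ForesightHist Z N → ProbabilityMeasure X => Φ s ⟨l' ++ [zi], hl⟩)
          = fun s => bfePush q
              (fun t => w (t.1, zi, g (t.1, l'.getLastD z₀, t.2.1), t.2.1, t.2.2))
              (bfe_u_cont w hw g hg zi _) (s ⟨l', hl'.le⟩) := by
        funext s
        apply ProbabilityMeasure.toMeasure_injective
        rw [bfePush_coe]
        exact hchild s l' hl' zi
      rw [this]
      exact (continuous_bfePush q _ _).comp (continuous_apply _)
  · refine ⟨fun h => bfeBuild z₀ q w hw g hg μinit h.1.reverse, ?_⟩
    set s₀ : ForesightHist Z N → ProbabilityMeasure X :=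
      fun h => bfeBuild z₀ q w hw g hg μinit h.1.reverse with hs₀
    funext h
    obtain ⟨l, hl⟩ := h
    rcases List.eq_nil_or_concat' l with rfl | ⟨l', zi, rfl⟩
    · exact hroot s₀
    · have hl' : l'.length < N := by simp at hl; omega
      apply ProbabilityMeasure.toMeasure_injective
      rw [hchild s₀ l' hl' zi]
      have h1 : s₀ ⟨l' ++ [zi], hl⟩
          = bfePush q (fun t => w (t.1, zi, g (t.1, l'.getLastD z₀, t.2.1), t.2.1, t.2.2))
            (bfe_u_cont w hw g hg zi _) (s₀ ⟨l', hl'.le⟩) :=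
        bfeBuild_concat z₀ q w hw g hg μinit l' zi
      rw [h1, bfePush_coe]
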